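/- arXiv:1806.09104 — 3 statements merged into one kernel-verified Lean document; each statement's English description precedes it below -/
import Mathlib

section
/- If P, Q are n×n positive definite matrices with P > Q (i.e., P − Q positive definite), then ‖P − Q‖ ≤ (e^{δ(P,Q)} − 1)‖Q‖, where ‖·‖ is the operator norm and δ the Riemannian distance. -/
/-- Singular values of a square real matrix, as square roots of the
eigenvalues of `Mᴴ * M`. -/
noncomputable def singVals {n : ℕ} (M : Matrix (Fin n) (Fin n) ℝ) : Fin n → ℝ :=
  fun k => Real.sqrt ((Matrix.isHermitian_conjTranspose_mul_self M).eigenvalues k)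

/-- The Riemannian distance `δ(P,Q) = sqrt (∑ k, log² σ_k (P Q⁻¹))`. -/
noncomputable def riem {n : ℕ} (P Q : Matrix (Fin n) (Fin n) ℝ) : ℝ :=
  Real.sqrt (∑ k, (Real.log (singVals (P * Q⁻¹) k)) ^ 2)

/-- Operator (spectral) norm of a real matrix. -/
noncomputable def opNorm {m n : ℕ} (A : Matrix (Fin m) (Fin n) ℝ) : ℝ :=
  ‖(Matrix.toEuclideanLin A).toContinuousLinearMap‖

/-!
Write `Q = S²` with `S = Q^{1/2}` and `B = S⁻¹ P S⁻¹`. Since `B` is symmetric, `B ≤ ‖B‖ • 1`, and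
conjugating by `S` gives `P ≤ ‖B‖ • Q`. The spectral norm of the symmetric matrix `B` is its
spectral radius, which is invariant under the similarity `B ↦ S B S⁻¹ = P Q⁻¹`, so
`‖B‖ ≤ ‖P Q⁻¹‖ = max_k σ_k(P Q⁻¹) ≤ e^{δ(P,Q)}`. Hence `0 ≤ P - Q ≤ (e^δ - 1) • Q`, and the spectral
norm is monotone on positive semidefinite matrices.
-/

open scoped Matrix.Norms.L2Operator MatrixOrder

lemma opNorm_eq_l2_opNorm {m n : ℕ} (A : Matrix (Fin m) (Fin n) ℝ) : opNorm A = ‖A‖ := rfl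

namespace Matrix

variable {n : Type*} [Fintype n] [DecidableEq n]

-- Only `≤`: for empty `n` the identity matrix has norm `0`, so there is no `NormOneClass`.
lemma l2_opNorm_one_le : ‖(1 : Matrix n n ℝ)‖ ≤ 1 := by
  rw [cstar_norm_def, map_one]
  exact ContinuousLinearMap.norm_id_le

lemma norm_le_l2_opNorm_of_mem_spectrum {A : Matrix n n ℝ} {k : ℝ} (hk : k ∈ spectrum ℝ A) :
    ‖k‖ ≤ ‖A‖ :=
  (spectrum.norm_le_norm_mul_of_mem hk).trans
    (mul_le_of_le_one_right (norm_nonneg A) l2_opNorm_one_le)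

lemma IsHermitian.spectralRadius_eq_l2_opNNNorm {A : Matrix n n ℝ} (hA : A.IsHermitian) :
    spectralRadius ℝ A = ‖A‖₊ := by
  have hT : IsSelfAdjoint (toEuclideanCLM (n := n) (𝕜 := ℝ) A) := hA.isSelfAdjoint.map _
  rw [cstar_nnnorm_def, ← ContinuousLinearMap.spectralRadius_eq_nnnorm _ hT, spectralRadius,
    spectralRadius, AlgEquiv.spectrum_eq]

lemma IsHermitian.l2_opNorm_le_of_forall_mem_spectrum {A : Matrix n n ℝ} (hA : A.IsHermitian)
    {c : ℝ} (hc : 0 ≤ c) (h : ∀ k ∈ spectrum ℝ A, |k| ≤ c) : ‖A‖ ≤ c := by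
  lift c to NNReal using hc
  have hρ : spectralRadius ℝ A ≤ c :=
    iSup₂_le fun k hk => ENNReal.coe_le_coe.mpr (by exact_mod_cast h k hk)
  rw [hA.spectralRadius_eq_l2_opNNNorm, ENNReal.coe_le_coe] at hρ
  exact_mod_cast hρ

lemma IsHermitian.le_l2_opNorm_smul_one {A : Matrix n n ℝ} (hA : A.IsHermitian) :
    A ≤ ‖A‖ • 1 := by
  rw [← Algebra.algebraMap_eq_smul_one]
  exact le_algebraMap_of_spectrum_le
    (fun k hk => (le_abs_self k).trans (norm_le_l2_opNorm_of_mem_spectrum hk)) hA.isSelfAdjoint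

lemma l2_opNorm_le_l2_opNorm_of_nonneg_of_le {A B : Matrix n n ℝ} (hA : 0 ≤ A) (hAB : A ≤ B) :
    ‖A‖ ≤ ‖B‖ := by
  have hA' : A.IsHermitian := (nonneg_iff_posSemidef.mp hA).isHermitian
  have hB : B.IsHermitian := (nonneg_iff_posSemidef.mp (hA.trans hAB)).isHermitian
  have hle : A ≤ algebraMap ℝ _ ‖B‖ := by
    rw [Algebra.algebraMap_eq_smul_one]
    exact hAB.trans hB.le_l2_opNorm_smul_one
  refine hA'.l2_opNorm_le_of_forall_mem_spectrum (norm_nonneg B) fun k hk => ?_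
  rw [abs_of_nonneg (spectrum_nonneg_of_nonneg hA hk)]
  exact (le_algebraMap_iff_spectrum_le hA'.isSelfAdjoint).mp hle k hk

lemma IsHermitian.l2_opNorm_le_l2_opNorm_conj {A S : Matrix n n ℝ} (hA : A.IsHermitian)
    (hS : IsUnit S) : ‖A‖ ≤ ‖S * A * S⁻¹‖ := by
  obtain ⟨u, rfl⟩ := hS
  rw [← coe_units_inv]
  exact hA.l2_opNorm_le_of_forall_mem_spectrum (norm_nonneg _) fun k hk =>
    norm_le_l2_opNorm_of_mem_spectrum (by rwa [spectrum.units_conjugate])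

lemma IsHermitian.inv_mul_mul_inv {P S : Matrix n n ℝ} (hP : P.IsHermitian)
    (hS : S.IsHermitian) : (S⁻¹ * P * S⁻¹).IsHermitian := by
  simpa only [hS.inv.eq] using isHermitian_mul_mul_conjTranspose S⁻¹ hP

lemma IsHermitian.le_l2_opNorm_conj_smul {P S : Matrix n n ℝ} (hP : P.IsHermitian)
    (hS : S.IsHermitian) (hSu : IsUnit S) : P ≤ ‖S⁻¹ * P * S⁻¹‖ • (S * S) := by
  have hdet : IsUnit S.det := (isUnit_iff_isUnit_det S).mp hSu
  have h := star_left_conjugate_le_conjugate (hP.inv_mul_mul_inv hS).le_l2_opNorm_smul_one S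
  rwa [star_eq_conjTranspose, hS.eq, mul_smul_comm, mul_one, smul_mul_assoc, ← mul_assoc,
    ← mul_assoc, mul_nonsing_inv _ hdet, one_mul, mul_assoc, nonsing_inv_mul _ hdet,
    mul_one] at h

end Matrix

open Matrix Real

lemma le_exp_sqrt_sum_log_sq {ι : Type*} [Fintype ι] (x : ι → ℝ) (k : ι) :
    x k ≤ exp √(∑ i, log (x i) ^ 2) := by
  rcases le_or_gt (x k) 0 with hk | hk
  · exact hk.trans (exp_pos _).le
  calc x k = exp (log (x k)) := (exp_log hk).symm
    _ ≤ exp √(log (x k) ^ 2) := by rw [sqrt_sq_eq_abs]; exact exp_le_exp.mpr (le_abs_self _)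
    _ ≤ exp √(∑ i, log (x i) ^ 2) := by
      gcongr
      exact Finset.single_le_sum (fun i _ => sq_nonneg (log (x i))) (Finset.mem_univ k)

lemma l2_opNorm_le_of_forall_singVals_le {n : ℕ} (M : Matrix (Fin n) (Fin n) ℝ) {c : ℝ}
    (hc : 0 ≤ c) (h : ∀ k, singVals M k ≤ c) : ‖M‖ ≤ c := by
  have hMM := isHermitian_conjTranspose_mul_self M
  have hsq : ‖Mᴴ * M‖ ≤ c ^ 2 :=
    hMM.l2_opNorm_le_of_forall_mem_spectrum (by positivity) fun k hk => by
      obtain ⟨i, rfl⟩ := hMM.spectrum_real_eq_range_eigenvalues ▸ hk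
      have h0 := eigenvalues_conjTranspose_mul_self_nonneg M i
      rw [abs_of_nonneg h0, ← sq_sqrt h0]
      exact pow_le_pow_left₀ (sqrt_nonneg _) (h i) 2
  rw [l2_opNorm_conjTranspose_mul_self, ← sq] at hsq
  exact (pow_le_pow_iff_left₀ (norm_nonneg M) hc two_ne_zero).mp hsq

lemma l2_opNorm_mul_inv_le_exp_riem {n : ℕ} (P Q : Matrix (Fin n) (Fin n) ℝ) :
    ‖P * Q⁻¹‖ ≤ exp (riem P Q) :=
  l2_opNorm_le_of_forall_singVals_le _ (exp_pos _).le fun k => le_exp_sqrt_sum_log_sq _ k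

theorem norm_sub_le_of_riem_general {n : ℕ} (P Q : Matrix (Fin n) (Fin n) ℝ)
    (hQ : Q.PosDef) (hPQ : (P - Q).PosDef) :
    opNorm (P - Q) ≤ (Real.exp (riem P Q) - 1) * opNorm Q := by
  set S := CFC.sqrt Q
  have hSS : S * S = Q := CFC.sqrt_mul_sqrt_self Q hQ.posSemidef.nonneg
  have hS : S.IsHermitian := (nonneg_iff_posSemidef.mp (CFC.sqrt_nonneg Q)).isHermitian
  have hSu : IsUnit S := isUnit_of_mul_isUnit_left (hSS ▸ hQ.isUnit)
  have hP : P.IsHermitian := by simpa using hPQ.isHermitian.add hQ.isHermitian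
  have hB : ‖S⁻¹ * P * S⁻¹‖ ≤ exp (riem P Q) := calc
    _ ≤ ‖S * (S⁻¹ * P * S⁻¹) * S⁻¹‖ := (hP.inv_mul_mul_inv hS).l2_opNorm_le_l2_opNorm_conj hSu
    _ = ‖P * Q⁻¹‖ := by
      rw [← hSS, Matrix.mul_inv_rev, ← mul_assoc, ← mul_assoc,
        mul_nonsing_inv _ ((isUnit_iff_isUnit_det S).mp hSu), one_mul, mul_assoc]
    _ ≤ exp (riem P Q) := l2_opNorm_mul_inv_le_exp_riem P Q
  have hPle : P ≤ exp (riem P Q) • Q := calc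
    P ≤ ‖S⁻¹ * P * S⁻¹‖ • (S * S) := hP.le_l2_opNorm_conj_smul hS hSu
    _ ≤ exp (riem P Q) • (S * S) := smul_le_smul_of_nonneg_right hB (hSS ▸ hQ.posSemidef.nonneg)
    _ = exp (riem P Q) • Q := by rw [hSS]
  have hδ : 0 ≤ exp (riem P Q) - 1 := sub_nonneg.mpr (one_le_exp (sqrt_nonneg _))
  rw [opNorm_eq_l2_opNorm, opNorm_eq_l2_opNorm, ← norm_of_nonneg hδ, ← norm_smul]
  exact l2_opNorm_le_l2_opNorm_of_nonneg_of_le hPQ.posSemidef.nonneg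
    (by rwa [sub_smul, one_smul, sub_le_sub_iff_right])

theorem norm_sub_le_of_riem {n : ℕ} (P Q : Matrix (Fin n) (Fin n) ℝ)
    (hP : P.PosDef) (hQ : Q.PosDef) (hPQ : (P - Q).PosDef) :
    opNorm (P - Q) ≤ (Real.exp (riem P Q) - 1) * opNorm Q :=
  norm_sub_le_of_riem_general P Q hQ hPQ
end

section
/- For positive definite matrices P, Q of size n×n, δ(P,Q) ≥ log‖PQ⁻¹‖, and consequently P ≤ e^{δ(P,Q)} Q. -/
/-!
Every singular value `σₖ` of `M = P Q⁻¹` satisfies `log σₖ ≤ δ(P, Q)`, so `Mᴴ M ≤ e^{2δ}` and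
`‖M‖ ≤ e^δ`. For the second claim write `Q = R²` with `R = Q^{1/2}`: the symmetric matrix
`R⁻¹ P R⁻¹ = R⁻¹ M R` is similar to `M`, so its eigenvalues are at most `‖M‖`; hence
`R⁻¹ P R⁻¹ ≤ ‖M‖`, and conjugating by `R` gives `P ≤ ‖M‖ Q ≤ e^δ Q`.
-/

open Matrix
open scoped MatrixOrder

lemma Matrix.IsHermitian.le_smul_one_of_eigenvalues_le {𝕜 : Type*} [RCLike 𝕜] {n : Type*}
    [Fintype n] [DecidableEq n] {A : Matrix n n 𝕜} (hA : A.IsHermitian) {c : ℝ}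
    (h : ∀ i, hA.eigenvalues i ≤ c) : A ≤ c • 1 := by
  rw [← Algebra.algebraMap_eq_smul_one]
  refine le_algebraMap_of_spectrum_le (fun x hx => ?_) hA
  obtain ⟨i, rfl⟩ := hA.spectrum_real_eq_range_eigenvalues ▸ hx
  exact h i

lemma opNorm_le_of_conjTranspose_mul_self_le {m n : ℕ} (M : Matrix (Fin m) (Fin n) ℝ) {c : ℝ}
    (hc : 0 ≤ c) (h : Mᴴ * M ≤ c ^ 2 • 1) : opNorm M ≤ c := by
  refine ContinuousLinearMap.opNorm_le_bound _ hc fun x => ?_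
  have hnorm_sq : inner ℝ (toEuclideanLin (Mᴴ * M) x) x = ‖toEuclideanLin M x‖ ^ 2 := by
    rw [toLpLin_mul_same, toEuclideanLin_conjTranspose_eq_adjoint, LinearMap.comp_apply,
      LinearMap.adjoint_inner_left, real_inner_self_eq_norm_sq]
  have hpos := (isPositive_toEuclideanLin_iff.2 h).inner_nonneg_left x
  rw [map_sub, LinearMap.sub_apply, inner_sub_left, hnorm_sq, map_smul, toLpLin_one,
    LinearMap.smul_apply, LinearMap.id_apply, real_inner_smul_left, real_inner_self_eq_norm_sq,
    sub_nonneg, ← mul_pow] at hpos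
  exact (sq_le_sq₀ (norm_nonneg _) (by positivity)).1 hpos

lemma opNorm_le_of_singVals_le {n : ℕ} (M : Matrix (Fin n) (Fin n) ℝ) {c : ℝ} (hc : 0 ≤ c)
    (h : ∀ k, singVals M k ≤ c) : opNorm M ≤ c := by
  refine opNorm_le_of_conjTranspose_mul_self_le M hc ?_
  refine (isHermitian_conjTranspose_mul_self M).le_smul_one_of_eigenvalues_le fun k => ?_
  rw [← Real.sq_sqrt ((posSemidef_conjTranspose_mul_self M).eigenvalues_nonneg k)]
  exact pow_le_pow_left₀ (Real.sqrt_nonneg _) (h k) 2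

lemma le_sqrt_sum_sq {ι : Type*} [Fintype ι] (f : ι → ℝ) (k : ι) : f k ≤ √(∑ i, f i ^ 2) :=
  (le_abs_self _).trans <| Real.abs_le_sqrt <|
    Finset.single_le_sum (fun i _ => sq_nonneg (f i)) (Finset.mem_univ k)

lemma singVals_le_exp_riem {n : ℕ} (P Q : Matrix (Fin n) (Fin n) ℝ) (k : Fin n) :
    singVals (P * Q⁻¹) k ≤ Real.exp (riem P Q) :=
  (Real.le_exp_log _).trans <| Real.exp_le_exp.2 <|
    le_sqrt_sum_sq (fun i => Real.log (singVals (P * Q⁻¹) i)) k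

lemma abs_le_opNorm_of_mem_spectrum {n : ℕ} {M : Matrix (Fin n) (Fin n) ℝ} {μ : ℝ}
    (hμ : μ ∈ spectrum ℝ M) : |μ| ≤ opNorm M := by
  open scoped Matrix.Norms.L2Operator in
  -- `‖1‖ = 0` when `n = 0`, so `spectrum.norm_le_norm_of_mem` (`NormOneClass`) does not apply.
  calc |μ| ≤ ‖M‖ * ‖(1 : Matrix (Fin n) (Fin n) ℝ)‖ := spectrum.norm_le_norm_mul_of_mem hμ
    _ ≤ ‖M‖ * 1 := by
      gcongr
      rw [l2_opNorm_def, LinearEquiv.trans_apply, toLpLin_one]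
      exact ContinuousLinearMap.norm_id_le
    _ = opNorm M := mul_one _

lemma le_opNorm_mul_inv_smul {n : ℕ} {P Q : Matrix (Fin n) (Fin n) ℝ} (hP : P.IsHermitian)
    (hQ : Q.PosDef) : P ≤ opNorm (P * Q⁻¹) • Q := by
  set R := CFC.sqrt Q
  have hR : IsUnit R := CFC.isUnit_sqrt_iff_isStrictlyPositive.2 hQ.isStrictlyPositive
  have hRsa : IsSelfAdjoint R := (CFC.sqrt_nonneg Q).isSelfAdjoint
  have hQR : Q = R * R := (CFC.sqrt_mul_sqrt_self Q hQ.posSemidef.nonneg).symm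
  have hRR : R⁻¹ * R = 1 := nonsing_inv_mul R ((isUnit_iff_isUnit_det R).1 hR)
  have hRR' : R * R⁻¹ = 1 := mul_nonsing_inv R ((isUnit_iff_isUnit_det R).1 hR)
  set S := R⁻¹ * P * R⁻¹
  have hS_conj : S = (↑hR.unit⁻¹ : Matrix (Fin n) (Fin n) ℝ) * (P * Q⁻¹) * hR.unit := by
    rw [hQR, Matrix.mul_inv_rev, Matrix.coe_units_inv, hR.unit_spec]
    simp [S, mul_assoc, hRR]
  have hS : IsSelfAdjoint S := by
    have hRinv : star R⁻¹ = R⁻¹ := IsHermitian.inv hRsa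
    simpa only [hRinv] using hP.isSelfAdjoint.conjugate R⁻¹
  have hS_le : S ≤ algebraMap ℝ _ (opNorm (P * Q⁻¹)) := by
    refine le_algebraMap_of_spectrum_le (fun x hx => ?_) hS
    rw [hS_conj, spectrum.units_conjugate'] at hx
    exact (le_abs_self x).trans (abs_le_opNorm_of_mem_spectrum hx)
  calc P = R * S * R := by simp [S, mul_assoc, hRR, ← mul_assoc R, hRR']
    _ ≤ R * algebraMap ℝ _ (opNorm (P * Q⁻¹)) * R := hRsa.conjugate_le_conjugate hS_le
    _ = opNorm (P * Q⁻¹) • Q := by rw [Algebra.algebraMap_eq_smul_one, hQR]; simp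

theorem riem_ge_log_opNorm {n : ℕ} (P Q : Matrix (Fin n) (Fin n) ℝ)
    (hP : P.PosDef) (hQ : Q.PosDef) :
    Real.log (opNorm (P * Q⁻¹)) ≤ riem P Q ∧
      (Real.exp (riem P Q) • Q - P).PosSemidef := by
  have hnorm : opNorm (P * Q⁻¹) ≤ Real.exp (riem P Q) :=
    opNorm_le_of_singVals_le _ (Real.exp_pos _).le (singVals_le_exp_riem P Q)
  constructor
  · have hnonneg : 0 ≤ opNorm (P * Q⁻¹) := norm_nonneg _
    rcases hnonneg.eq_or_lt with hzero | hpos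
    · rw [← hzero, Real.log_zero]
      exact Real.sqrt_nonneg _
    · exact (Real.log_le_iff_le_exp hpos).2 hnorm
  · rw [← le_iff]
    exact (le_opNorm_mul_inv_smul hP.isHermitian hQ).trans
      (smul_le_smul_of_nonneg_right hnorm hQ.posSemidef.nonneg)
end

section
/- Define recursively Γ_N(N) = Q_{NN} and Γ_k(N) = Q_{kk} − Q_{k,k+1} Γ_{k+1}(N)⁻¹ Q_{k+1,k} for k < N, where Q is a symmetric positive definite block-tridiagonal matrix with q̲ I ≤ Q ≤ q̄ I. Then q̲ I ≤ Γ_k(N) ≤ q̄ I for all 1 ≤ k ≤ N. -/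
/-!
`Γ_k` is the Schur complement at block `k` of the trailing principal submatrix of `Q`, which we
characterise without inverses: every `u` extends to a vector `w` supported on the blocks `≥ k`,
equal to `u` on block `k`, such that `Q w` vanishes on the blocks `> k` and equals `Γ_k u` on
block `k`. By tridiagonality this property descends along the recursion: take `w = w' + u`
(placed at block `k`), where `w'` extends `-Γ_{k+1}⁻¹ Q_{k+1,k} u`.

Then `uᵀ Γ_k u = wᵀ Q w ≥ q̲ |w|² ≥ q̲ |u|²`, the lower bound; in particular `Γ_{k+1}` is positive
definite, so `Γ_k = Q_kk - Q_{k,k+1} Γ_{k+1}⁻¹ Q_{k+1,k} ≤ Q_kk ≤ q̄ I`.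
-/

open Matrix

def blk {N d : ℕ} (A : Matrix (Fin N × Fin d) (Fin N × Fin d) ℝ) (i j : Fin N) :
    Matrix (Fin d) (Fin d) ℝ :=
  Matrix.of fun a b => A (i, a) (j, b)

section BlockCalculus

variable {N d : ℕ}

def blockSingle (k : Fin N) (u : Fin d → ℝ) : Fin N × Fin d → ℝ :=
  fun p => if p.1 = k then u p.2 else 0

lemma dotProduct_eq_sum_blocks (v w : Fin N × Fin d → ℝ) :
    v ⬝ᵥ w = ∑ j, (fun a => v (j, a)) ⬝ᵥ (fun a => w (j, a)) := by
  simp only [dotProduct, Fintype.sum_prod_type]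

lemma mulVec_apply_eq_blk_mulVec {Q : Matrix (Fin N × Fin d) (Fin N × Fin d) ℝ}
    {w : Fin N × Fin d → ℝ} {j m : Fin N}
    (h : ∀ l ≠ m, blk Q j l = 0 ∨ ∀ b, w (l, b) = 0) (a : Fin d) :
    (Q *ᵥ w) (j, a) = (blk Q j m *ᵥ fun b => w (m, b)) a := by
  have hsum : (Q *ᵥ w) (j, a) = ∑ l, (blk Q j l *ᵥ fun b => w (l, b)) a := by
    simp only [mulVec, dotProduct, blk, of_apply, Fintype.sum_prod_type]
  rw [hsum, Fintype.sum_eq_single m]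
  intro l hl
  rcases h l hl with hQ | hw
  · simp [hQ]
  · simp [show (fun b => w (l, b)) = 0 from funext hw]

lemma mulVec_blockSingle_apply (Q : Matrix (Fin N × Fin d) (Fin N × Fin d) ℝ)
    (k j : Fin N) (u : Fin d → ℝ) (a : Fin d) :
    (Q *ᵥ blockSingle k u) (j, a) = (blk Q j k *ᵥ u) a := by
  rw [mulVec_apply_eq_blk_mulVec (m := k) fun l hl => Or.inr fun b => if_neg hl]
  simp [blockSingle]

lemma blk_eq_zero_of_add_two_le {Q : Matrix (Fin N × Fin d) (Fin N × Fin d) ℝ}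
    (htri : ∀ i j : Fin N, 2 ≤ |(i : ℤ) - (j : ℤ)| → blk Q i j = 0) {i j : Fin N}
    (h : (i : ℕ) + 2 ≤ j ∨ (j : ℕ) + 2 ≤ i) : blk Q i j = 0 :=
  htri i j (by rw [le_abs']; omega)

lemma conjTranspose_blk {Q : Matrix (Fin N × Fin d) (Fin N × Fin d) ℝ}
    (hQ : Q.IsHermitian) (i j : Fin N) : (blk Q i j)ᴴ = blk Q j i := by
  ext a b
  simpa [blk] using hQ.apply (j, a) (i, b)

lemma Matrix.PosSemidef.smul_one_sub_blk {Q : Matrix (Fin N × Fin d) (Fin N × Fin d) ℝ} {c : ℝ}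
    (hQ : (c • 1 - Q).PosSemidef) (k : Fin N) : (c • 1 - blk Q k k).PosSemidef := by
  have hsub : c • 1 - blk Q k k = (c • 1 - Q).submatrix (k, ·) (k, ·) := by
    ext a b
    by_cases hab : a = b <;> simp [blk, hab]
  rw [hsub]
  exact hQ.submatrix _

end BlockCalculus

section LoewnerBounds

variable {n : Type*} [DecidableEq n]

lemma posSemidef_sub_smul_one_iff [Fintype n] {M : Matrix n n ℝ} (hM : M.IsHermitian) (c : ℝ) :
    (M - c • 1).PosSemidef ↔ ∀ x, c * (x ⬝ᵥ x) ≤ x ⬝ᵥ (M *ᵥ x) := by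
  have hform (x : n → ℝ) : star x ⬝ᵥ ((M - c • 1) *ᵥ x) = x ⬝ᵥ (M *ᵥ x) - c * (x ⬝ᵥ x) := by
    simp [sub_mulVec, dotProduct_sub, smul_mulVec, dotProduct_smul]
  refine ⟨fun h x => ?_, fun h => ?_⟩
  · have := h.dotProduct_mulVec_nonneg x
    rw [hform] at this
    linarith
  · refine .of_dotProduct_mulVec_nonneg (hM.sub (isHermitian_one.smul (IsSelfAdjoint.all c)))
      fun x => ?_
    rw [hform]
    linarith [h x]

lemma isHermitian_of_posSemidef_sub_smul_one {M : Matrix n n ℝ} {c : ℝ}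
    (hM : (M - c • 1).PosSemidef) : M.IsHermitian := by
  simpa using hM.isHermitian.add (isHermitian_one.smul (IsSelfAdjoint.all c))

lemma posDef_of_posSemidef_sub_smul_one {M : Matrix n n ℝ} {c : ℝ}
    (hM : (M - c • 1).PosSemidef) (hc : 0 < c) : M.PosDef := by
  simpa using PosDef.posSemidef_add hM (PosDef.one.smul hc)

end LoewnerBounds

section Schur

variable {N d : ℕ}

/-- The Schur complement at block `k` of the trailing principal submatrix of `Q` (blocks
`k, k+1, …`), described by elimination rather than by inverting that submatrix. -/
def IsTrailingSchurComplement (Q : Matrix (Fin N × Fin d) (Fin N × Fin d) ℝ) (k : Fin N)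
    (G : Matrix (Fin d) (Fin d) ℝ) : Prop :=
  ∀ u : Fin d → ℝ, ∃ w : Fin N × Fin d → ℝ,
    (∀ j < k, ∀ a, w (j, a) = 0) ∧ (∀ a, w (k, a) = u a) ∧
    (∀ j, k < j → ∀ a, (Q *ᵥ w) (j, a) = 0) ∧ ∀ a, (Q *ᵥ w) (k, a) = (G *ᵥ u) a

variable {Q : Matrix (Fin N × Fin d) (Fin N × Fin d) ℝ}

lemma isTrailingSchurComplement_blk_of_forall_le {k : Fin N} (hk : ∀ j, j ≤ k) :
    IsTrailingSchurComplement Q k (blk Q k k) := by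
  intro u
  refine ⟨blockSingle k u, fun j hj a => if_neg hj.ne, fun a => if_pos rfl,
    fun j hj => absurd (hk j) (not_le.mpr hj), fun a => mulVec_blockSingle_apply Q k k u a⟩

lemma IsTrailingSchurComplement.schur_step
    (htri : ∀ i j : Fin N, 2 ≤ |(i : ℤ) - (j : ℤ)| → blk Q i j = 0)
    {k k' : Fin N} (hkk' : (k' : ℕ) = k + 1) {G' : Matrix (Fin d) (Fin d) ℝ} (hG' : IsUnit G')
    (hS : IsTrailingSchurComplement Q k' G') :
    IsTrailingSchurComplement Q k (blk Q k k - blk Q k k' * G'⁻¹ * blk Q k' k) := by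
  intro u
  obtain ⟨w', hbefore, hk', hafter, hG'w⟩ := hS (-(G'⁻¹ *ᵥ (blk Q k' k *ᵥ u)))
  have hlt : k < k' := Fin.lt_def.mpr (by omega)
  refine ⟨w' + blockSingle k u, fun j hj a => ?_, fun a => ?_, fun j hj a => ?_, fun a => ?_⟩
  · simp [hbefore j (hj.trans hlt), blockSingle, hj.ne]
  · simp [hbefore k hlt, blockSingle]
  · rw [mulVec_add, Pi.add_apply, mulVec_blockSingle_apply]
    rcases eq_or_lt_of_le (Fin.le_def.mpr (by omega : (k' : ℕ) ≤ j)) with rfl | hj'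
    · rw [hG'w, mulVec_neg, mulVec_mulVec, mul_nonsing_inv _ ((isUnit_iff_isUnit_det _).mp hG'),
        one_mulVec]
      simp
    · rw [hafter j hj', blk_eq_zero_of_add_two_le htri (Or.inr (by omega))]
      simp
  · rw [mulVec_add, Pi.add_apply, mulVec_blockSingle_apply,
      mulVec_apply_eq_blk_mulVec (m := k') fun l hl => ?far]
    case far =>
      rcases lt_or_gt_of_ne hl with hl | hl
      · exact Or.inr (hbefore l hl)
      · exact Or.inl (blk_eq_zero_of_add_two_le htri (Or.inl (by omega)))
    rw [show (fun b => w' (k', b)) = _ from funext hk', sub_mulVec, mulVec_neg, mulVec_mulVec,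
      mulVec_mulVec, Matrix.mul_assoc, Pi.sub_apply, Pi.neg_apply]
    ring

lemma IsTrailingSchurComplement.sub_smul_one_posSemidef {k : Fin N}
    {G : Matrix (Fin d) (Fin d) ℝ} (hS : IsTrailingSchurComplement Q k G) (hG : G.IsHermitian)
    {c : ℝ} (hc : 0 ≤ c) (hQ : (Q - c • 1).PosSemidef) : (G - c • 1).PosSemidef := by
  refine (posSemidef_sub_smul_one_iff hG c).mpr fun u => ?_
  obtain ⟨w, hbefore, hk, hafter, hGu⟩ := hS u
  have hu : u = fun a => w (k, a) := funext fun a => (hk a).symm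
  have hform : u ⬝ᵥ (G *ᵥ u) = w ⬝ᵥ (Q *ᵥ w) := by
    rw [dotProduct_eq_sum_blocks, Fintype.sum_eq_single k, hu]
    · exact congrArg _ (funext fun a => by rw [hGu, hu])
    intro j hj
    rcases lt_or_gt_of_ne hj with hj | hj
    · simp [hbefore j hj]
    · simp [hafter j hj]
  have hnorm : u ⬝ᵥ u ≤ w ⬝ᵥ w := by
    rw [dotProduct_eq_sum_blocks, hu]
    exact Finset.single_le_sum (f := fun j => (fun a => w (j, a)) ⬝ᵥ fun a => w (j, a))
      (fun j _ => Finset.sum_nonneg fun a _ => mul_self_nonneg _)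
      (Finset.mem_univ k)
  calc c * (u ⬝ᵥ u) ≤ c * (w ⬝ᵥ w) := mul_le_mul_of_nonneg_left hnorm hc
    _ ≤ w ⬝ᵥ (Q *ᵥ w) :=
      (posSemidef_sub_smul_one_iff (isHermitian_of_posSemidef_sub_smul_one hQ) c).mp hQ w
    _ = u ⬝ᵥ (G *ᵥ u) := hform.symm

lemma isHermitian_blk_sub_mul_inv_mul (hQ : Q.IsHermitian) {G' : Matrix (Fin d) (Fin d) ℝ}
    (hG' : G'.IsHermitian) (k k' : Fin N) :
    (blk Q k k - blk Q k k' * G'⁻¹ * blk Q k' k).IsHermitian := by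
  refine IsHermitian.sub (conjTranspose_blk hQ k k) ?_
  rw [IsHermitian, conjTranspose_mul, conjTranspose_mul, conjTranspose_blk hQ,
    conjTranspose_blk hQ, hG'.inv, Matrix.mul_assoc]

lemma smul_one_sub_blk_sub_mul_inv_mul_posSemidef (hQ : Q.IsHermitian) {c : ℝ}
    (hupper : (c • 1 - Q).PosSemidef) {G' : Matrix (Fin d) (Fin d) ℝ} (hG' : G'.PosDef)
    (k k' : Fin N) :
    (c • 1 - (blk Q k k - blk Q k k' * G'⁻¹ * blk Q k' k)).PosSemidef := by
  have hcorr : (blk Q k k' * G'⁻¹ * blk Q k' k).PosSemidef := by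
    have := hG'.inv.posSemidef.mul_mul_conjTranspose_same (blk Q k k')
    rwa [conjTranspose_blk hQ] at this
  rw [sub_sub_eq_add_sub, add_sub_right_comm]
  exact (hupper.smul_one_sub_blk k).add hcorr

end Schur

/-- The backward Schur-complement recursion `Γ_N = Q_{NN}`,
`Γ_k = Q_{kk} − Q_{k,k+1} Γ_{k+1}⁻¹ Q_{k+1,k}` for a block-tridiagonal symmetric
positive definite matrix with `q̲ I ≤ Q ≤ q̄ I` stays within the same bounds:
`q̲ I ≤ Γ_k ≤ q̄ I`. -/
theorem gamma_recursion_bounds {N d : ℕ} (hN : 0 < N)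
    (Q : Matrix (Fin N × Fin d) (Fin N × Fin d) ℝ)
    (htri : ∀ i j : Fin N, 2 ≤ |(i : ℤ) - (j : ℤ)| → blk Q i j = 0)
    (qlow qhigh : ℝ) (h0 : 0 < qlow)
    (hlower : (Q - qlow • (1 : Matrix (Fin N × Fin d) (Fin N × Fin d) ℝ)).PosSemidef)
    (hupper : ((qhigh • (1 : Matrix (Fin N × Fin d) (Fin N × Fin d) ℝ)) - Q).PosSemidef)
    (G : ℕ → Matrix (Fin d) (Fin d) ℝ)
    (hGtop : G (N - 1) = blk Q ⟨N - 1, by omega⟩ ⟨N - 1, by omega⟩)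
    (hGrec : ∀ k (hk : k + 1 < N),
      G k = blk Q ⟨k, by omega⟩ ⟨k, by omega⟩ -
        blk Q ⟨k, by omega⟩ ⟨k + 1, hk⟩ * (G (k + 1))⁻¹ *
          blk Q ⟨k + 1, hk⟩ ⟨k, by omega⟩) :
    ∀ k, k < N →
      (G k - qlow • (1 : Matrix (Fin d) (Fin d) ℝ)).PosSemidef ∧
        ((qhigh • (1 : Matrix (Fin d) (Fin d) ℝ)) - G k).PosSemidef := by
  have hsymm : Q.IsHermitian := isHermitian_of_posSemidef_sub_smul_one hlower
  have hschur : ∀ k (hk : k ≤ N - 1),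
      (G k).IsHermitian ∧ IsTrailingSchurComplement Q ⟨k, by omega⟩ (G k) := by
    intro k hk
    induction hk using Nat.decreasingInduction with
    | self =>
      rw [hGtop]
      exact ⟨conjTranspose_blk hsymm _ _,
        isTrailingSchurComplement_blk_of_forall_le fun j => Nat.le_sub_one_of_lt j.isLt⟩
    | of_succ k hk ih =>
      have hpos : (G (k + 1)).PosDef :=
        posDef_of_posSemidef_sub_smul_one (ih.2.sub_smul_one_posSemidef ih.1 h0.le hlower) h0
      rw [hGrec k (by omega)]
      exact ⟨isHermitian_blk_sub_mul_inv_mul hsymm ih.1 _ _,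
        ih.2.schur_step htri rfl hpos.isUnit⟩
  have hlow : ∀ k, k < N → (G k - qlow • (1 : Matrix (Fin d) (Fin d) ℝ)).PosSemidef :=
    fun k hk =>
      let ⟨hherm, hS⟩ := hschur k (Nat.le_sub_one_of_lt hk)
      hS.sub_smul_one_posSemidef hherm h0.le hlower
  intro k hk
  refine ⟨hlow k hk, ?_⟩
  by_cases hk1 : k + 1 < N
  · rw [hGrec k hk1]
    exact smul_one_sub_blk_sub_mul_inv_mul_posSemidef hsymm hupper
      (posDef_of_posSemidef_sub_smul_one (hlow (k + 1) hk1) h0) _ _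
  · obtain rfl : k = N - 1 := by omega
    rw [hGtop]
    exact hupper.smul_one_sub_blk _
end
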